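/- arXiv:2107.09024 — 2 statements merged into one kernel-verified Lean document; each statement's English description precedes it below -/
import Mathlib

section
/- Let r ≥ 0 and s ≥ 1. Let A₁, A₂, A₃ be real polynomials in three variables x₁, x₂, x₃ such that for each k, deg_{x_k} A_k ≤ r + 1 and deg_{x_j} A_k ≤ r for j ≠ k. Let S₁, S₂, S₃ be real polynomials in two variables u, v with deg_u S_k ≤ s and deg_v S_k ≤ s, and let N₁, N₂, N₃ be the components of the cross product ∂_u S × ∂_v S of the formal partial derivatives. Then the bivariate polynomial r̂ = Σ_{k=1}^{3} A_k(S₁,S₂,S₃) · N_k satisfies deg_u r̂ ≤ 3s(r+1) − 1 and deg_v r̂ ≤ 3s(r+1) − 1. -/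
open MvPolynomial

/-!
`Aₖ(S)` has `u`-degree at most `s · Σⱼ deg_{xⱼ} Aₖ ≤ s(3r + 1)`, and every cross-product
component `Nₖ` is a difference of products `∂_u Sₐ · ∂_v S_b`, in which differentiating in `u`
lowers the `u`-degree by one, so `deg_u Nₖ ≤ (s - 1) + s`. Adding, each summand of `r̂` has
`u`-degree at most `s(3r + 1) + 2s - 1 = 3s(r + 1) - 1`; the same holds for `v`.
-/

namespace MvPolynomial

section CommSemiring

variable {σ R : Type*} [CommSemiring R]

theorem degreeOf_monomial_le (i : σ) (m : σ →₀ ℕ) (a : R) :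
    degreeOf i (monomial m a) ≤ m i := by
  classical
  simpa [degreeOf_def] using Multiset.count_le_of_le i (degrees_monomial m a)

theorem degreeOf_pderiv_le (i j : σ) (p : MvPolynomial σ R) :
    degreeOf i (pderiv j p) ≤ degreeOf i p := by
  classical
  conv_lhs => rw [as_sum p, map_sum]
  refine (degreeOf_sum_le i _ _).trans (Finset.sup_le fun m hm => ?_)
  rw [pderiv_monomial]
  refine (degreeOf_monomial_le i _ _).trans ((Nat.sub_le _ _).trans ?_)
  exact monomial_le_degreeOf i hm

theorem degreeOf_pderiv_self_le (i : σ) (p : MvPolynomial σ R) :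
    degreeOf i (pderiv i p) ≤ degreeOf i p - 1 := by
  classical
  conv_lhs => rw [as_sum p, map_sum]
  refine (degreeOf_sum_le i _ _).trans (Finset.sup_le fun m hm => ?_)
  rw [pderiv_monomial]
  by_cases h : m i = 0
  · simp [h]
  · refine (degreeOf_monomial_le i _ _).trans ?_
    rw [Finsupp.tsub_apply, Finsupp.single_eq_same]
    exact Nat.sub_le_sub_right (monomial_le_degreeOf i hm) 1

theorem degreeOf_aeval_le {ι : Type*} [Fintype ι] (i : σ) (P : MvPolynomial ι R)
    (S : ι → MvPolynomial σ R) :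
    degreeOf i (aeval S P) ≤ ∑ j, degreeOf j P * degreeOf i (S j) := by
  classical
  conv_lhs => rw [as_sum P, map_sum]
  refine (degreeOf_sum_le i _ _).trans (Finset.sup_le fun m hm => ?_)
  rw [aeval_monomial, algebraMap_eq, Finsupp.prod_fintype _ _ (fun _ => pow_zero _)]
  refine (degreeOf_C_mul_le _ i _).trans ((degreeOf_prod_le i _ _).trans ?_)
  refine Finset.sum_le_sum fun j _ => (degreeOf_pow_le i _ _).trans ?_
  exact Nat.mul_le_mul_right _ (monomial_le_degreeOf j hm)

theorem degreeOf_aeval_le_of_le {ι : Type*} [Fintype ι] {i : σ} {s : ℕ}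
    (P : MvPolynomial ι R) {S : ι → MvPolynomial σ R} (hS : ∀ j, degreeOf i (S j) ≤ s) :
    degreeOf i (aeval S P) ≤ (∑ j, degreeOf j P) * s := by
  rw [Finset.sum_mul]
  exact (degreeOf_aeval_le i P S).trans
    (Finset.sum_le_sum fun j _ => Nat.mul_le_mul_left _ (hS j))

theorem sum_degreeOf_le {ι : Type*} [Fintype ι] [DecidableEq ι] {P : MvPolynomial ι R}
    {k : ι} {r : ℕ} (hk : degreeOf k P ≤ r + 1) (hj : ∀ j, j ≠ k → degreeOf j P ≤ r) :
    ∑ j, degreeOf j P ≤ Fintype.card ι * r + 1 := by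
  calc ∑ j, degreeOf j P ≤ ∑ j, (r + if j = k then 1 else 0) := by
        refine Finset.sum_le_sum fun j _ => ?_
        split_ifs with h
        · exact h ▸ hk
        · simpa using hj j h
    _ = Fintype.card ι * r + 1 := by simp [Finset.sum_add_distrib]

end CommSemiring

section CommRing

variable {σ R : Type*} [CommRing R] {i j k : σ} {s : ℕ}

theorem degreeOf_pderiv_mul_pderiv_le (hi : i = j ∨ i = k) {p q : MvPolynomial σ R}
    (hp : degreeOf i p ≤ s) (hq : degreeOf i q ≤ s) :
    degreeOf i (pderiv j p * pderiv k q) ≤ 2 * s - 1 := by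
  refine (degreeOf_mul_le i _ _).trans ?_
  rcases hi with rfl | rfl
  · have := degreeOf_pderiv_self_le i p
    have := degreeOf_pderiv_le i k q
    omega
  · have := degreeOf_pderiv_le i j p
    have := degreeOf_pderiv_self_le i q
    omega

theorem degreeOf_jacobian_le (hi : i = j ∨ i = k) {p q : MvPolynomial σ R}
    (hp : degreeOf i p ≤ s) (hq : degreeOf i q ≤ s) :
    degreeOf i (pderiv j p * pderiv k q - pderiv j q * pderiv k p) ≤ 2 * s - 1 :=
  (degreeOf_sub_le i _ _).trans <| max_le
    (degreeOf_pderiv_mul_pderiv_le hi hp hq) (degreeOf_pderiv_mul_pderiv_le hi hq hp)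

end CommRing

end MvPolynomial

theorem stmt_5_general (r s : ℕ)
    (A : Fin 3 → MvPolynomial (Fin 3) ℝ)
    (hAdiag : ∀ k, degreeOf k (A k) ≤ r + 1)
    (hAoff : ∀ k j, j ≠ k → degreeOf j (A k) ≤ r)
    (S : Fin 3 → MvPolynomial (Fin 2) ℝ)
    (hSu : ∀ k, degreeOf 0 (S k) ≤ s) (hSv : ∀ k, degreeOf 1 (S k) ≤ s)
    (N : Fin 3 → MvPolynomial (Fin 2) ℝ)
    (hN₁ : N 0 = pderiv 0 (S 1) * pderiv 1 (S 2) - pderiv 0 (S 2) * pderiv 1 (S 1))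
    (hN₂ : N 1 = pderiv 0 (S 2) * pderiv 1 (S 0) - pderiv 0 (S 0) * pderiv 1 (S 2))
    (hN₃ : N 2 = pderiv 0 (S 0) * pderiv 1 (S 1) - pderiv 0 (S 1) * pderiv 1 (S 0))
    (rhat : MvPolynomial (Fin 2) ℝ)
    (hrhat : rhat = ∑ k : Fin 3, aeval S (A k) * N k) :
    degreeOf 0 rhat ≤ 3 * s * (r + 1) - 1 ∧ degreeOf 1 rhat ≤ 3 * s * (r + 1) - 1 := by
  have hS : ∀ i : Fin 2, ∀ k, degreeOf i (S k) ≤ s := by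
    intro i; fin_cases i
    exacts [hSu, hSv]
  have hN : ∀ i : Fin 2, ∀ k, degreeOf i (N k) ≤ 2 * s - 1 := by
    intro i k
    have hi : i = 0 ∨ i = 1 := by fin_cases i <;> simp
    fin_cases k
    · exact hN₁ ▸ degreeOf_jacobian_le hi (hS i 1) (hS i 2)
    · exact hN₂ ▸ degreeOf_jacobian_le hi (hS i 2) (hS i 0)
    · exact hN₃ ▸ degreeOf_jacobian_le hi (hS i 0) (hS i 1)
  have hA : ∀ i : Fin 2, ∀ k, degreeOf i (aeval S (A k)) ≤ (3 * r + 1) * s := fun i k =>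
    (degreeOf_aeval_le_of_le (A k) (hS i)).trans <| Nat.mul_le_mul_right _ <|
      by simpa using sum_degreeOf_le (hAdiag k) (hAoff k)
  have hrhat_le : ∀ i : Fin 2, degreeOf i rhat ≤ 3 * s * (r + 1) - 1 := by
    intro i
    rw [hrhat]
    refine (degreeOf_sum_le i _ _).trans (Finset.sup_le fun k _ => ?_)
    calc degreeOf i (aeval S (A k) * N k)
        ≤ (3 * r + 1) * s + (2 * s - 1) :=
          (degreeOf_mul_le i _ _).trans (add_le_add (hA i k) (hN i k))
      _ = 3 * s * (r + 1) - 1 := by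
        rcases s with _ | s
        · simp
        · have : 3 * (s + 1) * (r + 1) = (3 * r + 1) * (s + 1) + 2 * s + 2 := by ring
          omega
  exact ⟨hrhat_le 0, hrhat_le 1⟩

/-- Let `r ≥ 0`, `s ≥ 1`. If `A₁, A₂, A₃` are trivariate real polynomials with
`deg_{x_k} A_k ≤ r + 1` and `deg_{x_j} A_k ≤ r` for `j ≠ k`, and `S₁, S₂, S₃` are bivariate
real polynomials (variables `u = 0`, `v = 1`) of degree at most `s` in each variable, with
`N₁, N₂, N₃` the components of the cross product `∂_u S × ∂_v S`, then the bivariate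
polynomial `r̂ = Σₖ Aₖ(S₁,S₂,S₃) · Nₖ` has degree at most `3s(r+1) − 1` in each variable. -/
theorem stmt_5 (r s : ℕ) (hs : 1 ≤ s)
    (A : Fin 3 → MvPolynomial (Fin 3) ℝ)
    (hAdiag : ∀ k, degreeOf k (A k) ≤ r + 1)
    (hAoff : ∀ k j, j ≠ k → degreeOf j (A k) ≤ r)
    (S : Fin 3 → MvPolynomial (Fin 2) ℝ)
    (hSu : ∀ k, degreeOf 0 (S k) ≤ s) (hSv : ∀ k, degreeOf 1 (S k) ≤ s)
    (N : Fin 3 → MvPolynomial (Fin 2) ℝ)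
    (hN₁ : N 0 = pderiv 0 (S 1) * pderiv 1 (S 2) - pderiv 0 (S 2) * pderiv 1 (S 1))
    (hN₂ : N 1 = pderiv 0 (S 2) * pderiv 1 (S 0) - pderiv 0 (S 0) * pderiv 1 (S 2))
    (hN₃ : N 2 = pderiv 0 (S 0) * pderiv 1 (S 1) - pderiv 0 (S 1) * pderiv 1 (S 0))
    (rhat : MvPolynomial (Fin 2) ℝ)
    (hrhat : rhat = ∑ k : Fin 3, aeval S (A k) * N k) :
    degreeOf 0 rhat ≤ 3 * s * (r + 1) - 1 ∧ degreeOf 1 rhat ≤ 3 * s * (r + 1) - 1 :=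
  stmt_5_general r s A hAdiag hAoff S hSu hSv N hN₁ hN₂ hN₃ rhat hrhat
end

section
/- For natural numbers p and i with i ≤ p, the formal derivative of the polynomial Σ_{j=i+1}^{p+1} B_j^{p+1} equals (p+1)·B_i^p; equivalently, (1/(p+1)) Σ_{j=i+1}^{p+1} B_j^{p+1} is an antiderivative of the Bernstein polynomial B_i^p. -/
open Polynomial Finset

namespace bernsteinPolynomial

variable (R : Type*) [CommRing R]

/-- For `i > n` both sides vanish; otherwise the derivatives `(n + 1) (B_ν^n - B_{ν+1}^n)` of the
summands telescope, the last term `B_{n+1}^n` being zero. -/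
theorem derivative_sum_Icc (n i : ℕ) :
    derivative (∑ j ∈ Icc (i + 1) (n + 1), bernsteinPolynomial R (n + 1) j) =
      ((n : R) + 1) • bernsteinPolynomial R n i := by
  rcases le_or_gt i n with hi | hi
  · calc derivative (∑ j ∈ Icc (i + 1) (n + 1), bernsteinPolynomial R (n + 1) j)
        = ∑ ν ∈ Ico i (n + 1), derivative (bernsteinPolynomial R (n + 1) (ν + 1)) := by
          rw [map_sum, ← Ico_add_one_right_eq_Icc,
            sum_Ico_add' (fun j ↦ derivative (bernsteinPolynomial R (n + 1) j))]
      _ = (n + 1 : R[X]) * ∑ ν ∈ Ico i (n + 1),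
            (bernsteinPolynomial R n ν - bernsteinPolynomial R n (ν + 1)) := by
          simp only [derivative_succ_aux, mul_sum]
      _ = ((n : R) + 1) • bernsteinPolynomial R n i := by
          have telescope : ∑ ν ∈ Ico i (n + 1),
              (bernsteinPolynomial R n ν - bernsteinPolynomial R n (ν + 1)) =
                bernsteinPolynomial R n i - bernsteinPolynomial R n (n + 1) := by
            rw [← neg_sub, ← sum_Ico_sub _ (by omega), ← sum_neg_distrib]
            simp only [neg_sub]
          rw [telescope, eq_zero_of_lt R n.lt_succ_self, sub_zero, smul_eq_C_mul]
          simp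
  · rw [Icc_eq_empty (by omega), sum_empty, map_zero, eq_zero_of_lt R hi, smul_zero]

end bernsteinPolynomial

theorem stmt_8_general (p i : ℕ) :
    Polynomial.derivative (∑ j ∈ Finset.Icc (i + 1) (p + 1), bernsteinPolynomial ℝ (p + 1) j)
      = ((p : ℝ) + 1) • bernsteinPolynomial ℝ p i :=
  bernsteinPolynomial.derivative_sum_Icc ℝ p i

/-- For `i ≤ p`, the formal derivative of `Σ_{j=i+1}^{p+1} B_j^{p+1}` equals
`(p+1) · B_i^p`; i.e. `(1/(p+1)) Σ_{j=i+1}^{p+1} B_j^{p+1}` is an antiderivative of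
the Bernstein polynomial `B_i^p`. -/
theorem stmt_8 (p i : ℕ) (h : i ≤ p) :
    Polynomial.derivative (∑ j ∈ Finset.Icc (i + 1) (p + 1), bernsteinPolynomial ℝ (p + 1) j)
      = ((p : ℝ) + 1) • bernsteinPolynomial ℝ p i :=
  stmt_8_general p i
end
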